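/- arXiv:0707.4239 — 5 statements merged into one kernel-verified Lean document; each statement's English description precedes it below -/
import Mathlib

section
/- Let f and g be nonnegative Lebesgue measurable functions on [0,1] and let f* and g* denote their nonincreasing rearrangements. Then ∫₀¹ f(x)g(x) dx ≤ ∫₀¹ f*(x)g*(x) dx. -/
open MeasureTheory

/-- The nonincreasing rearrangement of a function on `[0,1]`:
`f*(x) = sup {y : m({f > y}) > x}` for `0 ≤ x < 1`, and `f*(1) = essinf f`. -/
noncomputable def decRearr (f : ℝ → ℝ) (x : ℝ) : ℝ :=
  if x < 1 then
    sSup {y : ℝ | ENNReal.ofReal x < volume {t ∈ Set.Icc (0:ℝ) 1 | y < f t}}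
  else essInf f (volume.restrict (Set.Icc (0:ℝ) 1))

open Set
open scoped ENNReal

noncomputable def Jnd (a : ℝ) (s : ℝ) : ℝ≥0∞ := (Set.Iio a).indicator (fun _ => 1) s

lemma ofReal_eq_lint (a : ℝ) : ENNReal.ofReal a = ∫⁻ s in Set.Ioi (0:ℝ), Jnd a s := by
  unfold Jnd
  rw [lintegral_indicator measurableSet_Iio, setLIntegral_one,
    Measure.restrict_apply measurableSet_Iio]
  rw [Set.inter_comm _ _, Set.Ioi_inter_Iio ]
  simp [Real.volume_Ioo]

lemma Jnd_meas (a : ℝ) : Measurable (Jnd a) :=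
  measurable_const.indicator measurableSet_Iio

lemma Jnd_prod_meas {φ : ℝ → ℝ} (hφ : Measurable φ) :
    Measurable (fun p : ℝ × ℝ => Jnd (φ p.1) p.2) := by
  have : (fun p : ℝ × ℝ => Jnd (φ p.1) p.2)
      = Set.indicator {p : ℝ × ℝ | p.2 < φ p.1} (fun _ => 1) := by
    ext p
    simp [Jnd, Set.indicator_apply, Set.mem_Iio, Set.mem_setOf_eq]
  rw [this]
  exact measurable_const.indicator (measurableSet_lt measurable_snd (hφ.comp measurable_fst))

lemma Jnd_x_meas {φ : ℝ → ℝ} (hφ : Measurable φ) (s : ℝ) :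
    Measurable (fun x => Jnd (φ x) s) := by
  have : (fun x => Jnd (φ x) s) = Set.indicator {x : ℝ | s < φ x} (fun _ => 1) := by
    ext x
    simp [Jnd, Set.indicator_apply, Set.mem_Iio, Set.mem_setOf_eq]
  rw [this]
  exact measurable_const.indicator (measurableSet_lt measurable_const hφ)

lemma doubleLC (μ : Measure ℝ) [SFinite μ] (φ ψ : ℝ → ℝ)
    (hφ : Measurable φ) (hψ : Measurable ψ)
    (h0 : ∀ᵐ x ∂μ, 0 ≤ φ x ∧ 0 ≤ ψ x) :
    ∫⁻ x, ENNReal.ofReal (φ x * ψ x) ∂μ =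
      ∫⁻ s in Set.Ioi (0:ℝ), ∫⁻ t in Set.Ioi (0:ℝ),
        μ ({x | s < φ x} ∩ {x | t < ψ x}) := by
  calc ∫⁻ x, ENNReal.ofReal (φ x * ψ x) ∂μ
      = ∫⁻ x, ENNReal.ofReal (φ x) * ENNReal.ofReal (ψ x) ∂μ :=
        lintegral_congr_ae (h0.mono fun x hx => by dsimp only; rw [ENNReal.ofReal_mul hx.1])
    _ = ∫⁻ x, (∫⁻ s in Set.Ioi (0:ℝ), Jnd (φ x) s * ENNReal.ofReal (ψ x)) ∂μ := by
        refine lintegral_congr fun x => ?_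
        rw [ofReal_eq_lint (φ x), lintegral_mul_const _ (Jnd_meas (φ x))]
    _ = ∫⁻ s in Set.Ioi (0:ℝ), ∫⁻ x, Jnd (φ x) s * ENNReal.ofReal (ψ x) ∂μ := by
        refine lintegral_lintegral_swap
          (f := fun x s => Jnd (φ x) s * ENNReal.ofReal (ψ x)) ?_
        exact ((Jnd_prod_meas hφ).mul
          ((ENNReal.measurable_ofReal.comp hψ).comp measurable_fst)).aemeasurable
    _ = ∫⁻ s in Set.Ioi (0:ℝ), ∫⁻ x, (∫⁻ t in Set.Ioi (0:ℝ), Jnd (φ x) s * Jnd (ψ x) t) ∂μ := by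
        refine lintegral_congr fun s => lintegral_congr fun x => ?_
        rw [ofReal_eq_lint (ψ x), lintegral_const_mul _ (Jnd_meas (ψ x))]
    _ = ∫⁻ s in Set.Ioi (0:ℝ), ∫⁻ t in Set.Ioi (0:ℝ), ∫⁻ x, Jnd (φ x) s * Jnd (ψ x) t ∂μ := by
        refine lintegral_congr fun s => ?_
        refine lintegral_lintegral_swap
          (f := fun x t => Jnd (φ x) s * Jnd (ψ x) t) ?_
        exact (((Jnd_x_meas hφ s).comp measurable_fst).mul (Jnd_prod_meas hψ)).aemeasurable
    _ = ∫⁻ s in Set.Ioi (0:ℝ), ∫⁻ t in Set.Ioi (0:ℝ),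
          μ ({x | s < φ x} ∩ {x | t < ψ x}) := by
        refine lintegral_congr fun s => lintegral_congr fun t => ?_
        have h1 : ∀ x, Jnd (φ x) s * Jnd (ψ x) t
            = ({x | s < φ x} ∩ {x | t < ψ x}).indicator (fun _ => 1) x := by
          intro x
          by_cases h1 : s < φ x <;> by_cases h2 : t < ψ x <;>
            simp [Jnd, Set.indicator_apply, Set.mem_Iio, Set.mem_setOf_eq, h1, h2]
        rw [lintegral_congr h1, lintegral_indicator
          ((measurableSet_lt measurable_const hφ).inter (measurableSet_lt measurable_const hψ)),
          setLIntegral_one]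

noncomputable def Ff (f : ℝ → ℝ) (y : ℝ) : ℝ≥0∞ := volume {t ∈ Set.Icc (0:ℝ) 1 | y < f t}

lemma lvl_meas {f : ℝ → ℝ} (hf : Measurable f) (y : ℝ) :
    MeasurableSet {t ∈ Set.Icc (0:ℝ) 1 | y < f t} :=
  measurableSet_Icc.inter (measurableSet_lt measurable_const hf)

lemma Ff_anti (f : ℝ → ℝ) : Antitone (Ff f) := fun y y' h =>
  measure_mono (fun t ht => ⟨ht.1, lt_of_le_of_lt h ht.2⟩)

lemma Ff_le_one (f : ℝ → ℝ) (y : ℝ) : Ff f y ≤ 1 := by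
  calc Ff f y ≤ volume (Set.Icc (0:ℝ) 1) := measure_mono (fun t ht => ht.1)
    _ = 1 := by simp [Real.volume_Icc]

lemma Ff_ne_top (f : ℝ → ℝ) (y : ℝ) : Ff f y ≠ ⊤ :=
  (lt_of_le_of_lt (Ff_le_one f y) ENNReal.one_lt_top).ne

lemma Ff_full {f : ℝ → ℝ} (hf0 : ∀ x ∈ Set.Icc (0:ℝ) 1, 0 ≤ f x) {y : ℝ} (hy : y < 0) :
    Ff f y = 1 := by
  have : {t ∈ Set.Icc (0:ℝ) 1 | y < f t} = Set.Icc (0:ℝ) 1 := by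
    ext t
    exact ⟨fun ht => ht.1, fun ht => ⟨ht, lt_of_lt_of_le hy (hf0 t ht)⟩⟩
  rw [Ff, this]
  simp [Real.volume_Icc]

lemma Ff_small {f : ℝ → ℝ} (hf : Measurable f) {ε : ℝ≥0∞} (hε : 0 < ε) :
    ∃ y : ℝ, Ff f y < ε := by
  have hanti : Antitone (fun n : ℕ => {t ∈ Set.Icc (0:ℝ) 1 | (n:ℝ) < f t}) := by
    intro n m hnm t ht
    exact ⟨ht.1, lt_of_le_of_lt (by exact_mod_cast hnm) ht.2⟩
  have hI : (⋂ n : ℕ, {t ∈ Set.Icc (0:ℝ) 1 | (n:ℝ) < f t}) = ∅ := by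
    ext t
    simp only [Set.mem_iInter, Set.mem_empty_iff_false, iff_false, not_forall]
    obtain ⟨n, hn⟩ := exists_nat_gt (f t)
    exact ⟨n, fun h => absurd h.2 (not_lt.mpr hn.le)⟩
  have h := tendsto_measure_iInter_atTop (μ := volume)
    (s := fun n : ℕ => {t ∈ Set.Icc (0:ℝ) 1 | (n:ℝ) < f t})
    (fun n => (lvl_meas hf (n:ℝ)).nullMeasurableSet) hanti
    ⟨0, by simp only [Nat.cast_zero]; exact Ff_ne_top f 0⟩
  rw [hI, measure_empty] at h
  obtain ⟨n, hn⟩ := (h.eventually_lt_const hε).exists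
  exact ⟨n, hn⟩

lemma S_bddAbove {f : ℝ → ℝ} (hf : Measurable f) {x : ℝ} (hx : 0 < x) :
    BddAbove {y : ℝ | ENNReal.ofReal x < Ff f y} := by
  obtain ⟨y0, hy0⟩ := Ff_small hf (ENNReal.ofReal_pos.mpr hx)
  refine ⟨y0, fun y hy => ?_⟩
  by_contra hc
  push_neg at hc
  exact absurd hy (not_lt.mpr (le_of_lt (lt_of_le_of_lt (Ff_anti f hc.le) hy0)))

lemma decRearr_gt {f : ℝ → ℝ} (hf : Measurable f) {x s : ℝ} (hx : x ∈ Set.Ioo (0:ℝ) 1)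
    (hs : ENNReal.ofReal x < Ff f s) : s < decRearr f x := by
  have hmono : Monotone (fun n : ℕ => {t ∈ Set.Icc (0:ℝ) 1 | s + 1/(n+1) < f t}) := by
    intro n m hnm t ht
    refine ⟨ht.1, lt_of_le_of_lt ?_ ht.2⟩
    gcongr
  have hU : (⋃ n : ℕ, {t ∈ Set.Icc (0:ℝ) 1 | s + 1/(n+1) < f t})
      = {t ∈ Set.Icc (0:ℝ) 1 | s < f t} := by
    ext t
    simp only [Set.mem_iUnion]
    constructor
    · rintro ⟨n, hn⟩
      refine ⟨hn.1, lt_trans ?_ hn.2⟩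
      have : (0:ℝ) < 1/(n+1) := by positivity
      linarith
    · rintro ⟨ht1, ht2⟩
      obtain ⟨n, hn⟩ := exists_nat_one_div_lt (sub_pos.mpr ht2)
      exact ⟨n, ht1, by linarith⟩
  have hsup := hmono.measure_iUnion (μ := volume)
  rw [hU] at hsup
  have : ENNReal.ofReal x < ⨆ n : ℕ, Ff f (s + 1/(n+1)) := by
    unfold Ff at hs ⊢
    calc ENNReal.ofReal x < volume {t ∈ Set.Icc (0:ℝ) 1 | s < f t} := hs
      _ = _ := hsup
  obtain ⟨n, hn⟩ := lt_iSup_iff.mp this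
  have hmem : s + 1/(n+1) ∈ {y : ℝ | ENNReal.ofReal x < Ff f y} := hn
  have hle := le_csSup (S_bddAbove hf hx.1) hmem
  rw [decRearr, if_pos hx.2]
  have hpos : (0:ℝ) < 1/(n+1) := by positivity
  calc s < s + 1/(n+1) := by linarith
    _ ≤ _ := hle

lemma decRearr_nonneg {f : ℝ → ℝ} (hf : Measurable f)
    (hf0 : ∀ x ∈ Set.Icc (0:ℝ) 1, 0 ≤ f x) {x : ℝ} (hx : x ∈ Set.Ioo (0:ℝ) 1) :
    0 ≤ decRearr f x := by
  by_contra h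
  push_neg at h
  have h2 : ENNReal.ofReal x < Ff f (decRearr f x) := by
    rw [Ff_full hf0 h]
    exact ENNReal.ofReal_lt_one.mpr hx.2
  exact absurd (decRearr_gt hf hx h2) (lt_irrefl _)

lemma decRearr_antitoneOn {f : ℝ → ℝ} (hf : Measurable f)
    (hf0 : ∀ x ∈ Set.Icc (0:ℝ) 1, 0 ≤ f x) :
    AntitoneOn (decRearr f) (Set.Ioo (0:ℝ) 1) := by
  intro x hx x' hx' hxx'
  rw [decRearr, if_pos hx'.2, decRearr, if_pos hx.2]
  apply csSup_le_csSup (S_bddAbove hf hx.1)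
  · refine ⟨-1, ?_⟩
    show ENNReal.ofReal x' < Ff f (-1)
    rw [Ff_full hf0 (by norm_num)]
    exact ENNReal.ofReal_lt_one.mpr hx'.2
  · intro y hy
    exact lt_of_le_of_lt (ENNReal.ofReal_le_ofReal hxx') hy

lemma decRearr_superlevel {f : ℝ → ℝ} (hf : Measurable f)
    (hf0 : ∀ x ∈ Set.Icc (0:ℝ) 1, 0 ≤ f x) (s : ℝ) :
    Set.Ioo (0:ℝ) ((Ff f s).toReal) ⊆ {x | s < decRearr f x} := by
  intro x hx
  have h1 : (Ff f s).toReal ≤ 1 := by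
    calc (Ff f s).toReal ≤ (1:ℝ≥0∞).toReal :=
      ENNReal.toReal_mono ENNReal.one_ne_top (Ff_le_one f s)
    _ = 1 := by simp
  have hx1 : x ∈ Set.Ioo (0:ℝ) 1 := ⟨hx.1, lt_of_lt_of_le hx.2 h1⟩
  exact decRearr_gt hf hx1
    ((ENNReal.ofReal_lt_iff_lt_toReal hx.1.le (Ff_ne_top f s)).mpr hx.2)

/-- Hardy–Littlewood–Pólya: for nonnegative measurable `f, g` on `[0,1]`,
`∫₀¹ f g ≤ ∫₀¹ f* g*`. -/
theorem stmt_0 (f g : ℝ → ℝ) (hf : Measurable f) (hg : Measurable g)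
    (hf0 : ∀ x ∈ Set.Icc (0:ℝ) 1, 0 ≤ f x) (hg0 : ∀ x ∈ Set.Icc (0:ℝ) 1, 0 ≤ g x) :
    ∫⁻ x in Set.Icc (0:ℝ) 1, ENNReal.ofReal (f x * g x) ≤
      ∫⁻ x in Set.Icc (0:ℝ) 1, ENNReal.ofReal (decRearr f x * decRearr g x) := by
  set μ := volume.restrict (Set.Icc (0:ℝ) 1) with hμdef
  set ν := volume.restrict (Set.Ioo (0:ℝ) 1) with hνdef
  have hfae : AEMeasurable (decRearr f) ν :=
    aemeasurable_restrict_of_antitoneOn measurableSet_Ioo (decRearr_antitoneOn hf hf0)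
  have hgae : AEMeasurable (decRearr g) ν :=
    aemeasurable_restrict_of_antitoneOn measurableSet_Ioo (decRearr_antitoneOn hg hg0)
  set f1 := hfae.mk _ with hf1def
  set g1 := hgae.mk _ with hg1def
  have hf1m : Measurable f1 := hfae.measurable_mk
  have hg1m : Measurable g1 := hgae.measurable_mk
  have hfeq : decRearr f =ᵐ[ν] f1 := hfae.ae_eq_mk
  have hgeq : decRearr g =ᵐ[ν] g1 := hgae.ae_eq_mk
  have hmem : ∀ᵐ x ∂ν, x ∈ Set.Ioo (0:ℝ) 1 := ae_restrict_mem measurableSet_Ioo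
  have h0fg : ∀ᵐ x ∂μ, 0 ≤ f x ∧ 0 ≤ g x :=
    (ae_restrict_mem measurableSet_Icc).mono fun x hx => ⟨hf0 x hx, hg0 x hx⟩
  have h0f1 : ∀ᵐ x ∂ν, 0 ≤ f1 x ∧ 0 ≤ g1 x := by
    filter_upwards [hmem, hfeq, hgeq] with x hx h1 h2
    exact ⟨h1 ▸ decRearr_nonneg hf hf0 hx, h2 ▸ decRearr_nonneg hg hg0 hx⟩
  have step : ∀ s t : ℝ,
      μ ({x | s < f x} ∩ {x | t < g x}) ≤ ν ({x | s < f1 x} ∩ {x | t < g1 x}) := by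
    intro s t
    have hc : μ ({x | s < f x} ∩ {x | t < g x}) ≤ min (Ff f s) (Ff g t) := by
      refine le_min ?_ ?_
      · rw [hμdef, Measure.restrict_apply' measurableSet_Icc]
        exact measure_mono fun x hx => ⟨hx.2, hx.1.1⟩
      · rw [hμdef, Measure.restrict_apply' measurableSet_Icc]
        exact measure_mono fun x hx => ⟨hx.2, hx.1.2⟩
    refine le_trans hc ?_
    have heq : ν ({x | s < f1 x} ∩ {x | t < g1 x})
        = ν ({x | s < decRearr f x} ∩ {x | t < decRearr g x}) := by
      apply measure_congr
      refine Filter.eventuallyEq_set.mpr ?_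
      filter_upwards [hfeq, hgeq] with x h1 h2
      simp only [Set.mem_inter_iff, Set.mem_setOf_eq, h1, h2]
    rw [heq]
    set c := min (Ff f s) (Ff g t) with hcdef
    have hcne : c ≠ ⊤ := by
      intro h
      exact Ff_ne_top f s (eq_top_iff.mpr (h ▸ min_le_left _ _))
    have hc1 : c.toReal ≤ 1 := by
      calc c.toReal ≤ (1:ℝ≥0∞).toReal :=
            ENNReal.toReal_mono ENNReal.one_ne_top
              (le_trans (min_le_left _ _) (Ff_le_one f s))
        _ = 1 := by simp
    have hsub : Set.Ioo (0:ℝ) c.toReal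
        ⊆ ({x | s < decRearr f x} ∩ {x | t < decRearr g x}) := by
      intro x hx
      constructor
      · exact decRearr_superlevel hf hf0 s
          ⟨hx.1, lt_of_lt_of_le hx.2
            (ENNReal.toReal_mono (Ff_ne_top f s) (min_le_left _ _))⟩
      · exact decRearr_superlevel hg hg0 t
          ⟨hx.1, lt_of_lt_of_le hx.2
            (ENNReal.toReal_mono (Ff_ne_top g t) (min_le_right _ _))⟩
    calc c = ν (Set.Ioo (0:ℝ) c.toReal) := by
          rw [hνdef, Measure.restrict_apply measurableSet_Ioo,
            Set.inter_eq_self_of_subset_left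
              (Set.Ioo_subset_Ioo le_rfl hc1), Real.volume_Ioo, sub_zero,
            ENNReal.ofReal_toReal hcne]
      _ ≤ _ := measure_mono hsub
  calc ∫⁻ x, ENNReal.ofReal (f x * g x) ∂μ
      = ∫⁻ s in Set.Ioi (0:ℝ), ∫⁻ t in Set.Ioi (0:ℝ),
          μ ({x | s < f x} ∩ {x | t < g x}) := doubleLC μ f g hf hg h0fg
    _ ≤ ∫⁻ s in Set.Ioi (0:ℝ), ∫⁻ t in Set.Ioi (0:ℝ),
          ν ({x | s < f1 x} ∩ {x | t < g1 x}) :=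
        lintegral_mono fun s => lintegral_mono fun t => step s t
    _ = ∫⁻ x, ENNReal.ofReal (f1 x * g1 x) ∂ν :=
        (doubleLC ν f1 g1 hf1m hg1m h0f1).symm
    _ = ∫⁻ x, ENNReal.ofReal (decRearr f x * decRearr g x) ∂ν := by
        refine lintegral_congr_ae ?_
        filter_upwards [hfeq, hgeq] with x h1 h2
        rw [h1, h2]
    _ ≤ ∫⁻ x, ENNReal.ofReal (decRearr f x * decRearr g x) ∂μ :=
        lintegral_mono' (Measure.restrict_mono Set.Ioo_subset_Icc_self le_rfl) le_rfl
end

section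
/- If f and g are bounded nonnegative measurable functions on [0,1] such that ∫₀¹ fⁿ dx = ∫₀¹ gⁿ dx for all natural numbers n ≥ 0, then the nonincreasing rearrangements of f and g coincide: f*(x) = g*(x) for all x in [0,1]. -/
open MeasureTheory

lemma aux_map_eq (f g : ℝ → ℝ) (hf : Measurable f) (hg : Measurable g) (C : ℝ)
    (hfbd : ∀ x ∈ Set.Icc (0:ℝ) 1, f x ≤ C) (hgbd : ∀ x ∈ Set.Icc (0:ℝ) 1, g x ≤ C)
    (hf0 : ∀ x ∈ Set.Icc (0:ℝ) 1, 0 ≤ f x) (hg0 : ∀ x ∈ Set.Icc (0:ℝ) 1, 0 ≤ g x)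
    (hmom : ∀ n : ℕ, ∫ x in Set.Icc (0:ℝ) 1, (f x) ^ n = ∫ x in Set.Icc (0:ℝ) 1, (g x) ^ n) :
    Measure.map f (volume.restrict (Set.Icc (0:ℝ) 1))
      = Measure.map g (volume.restrict (Set.Icc (0:ℝ) 1)) := by
  set μ0 : Measure ℝ := volume.restrict (Set.Icc (0:ℝ) 1) with hμ0
  have hμ0prob : IsProbabilityMeasure μ0 := by
    constructor
    rw [hμ0, Measure.restrict_apply MeasurableSet.univ, Set.univ_inter, Real.volume_Icc]
    norm_num
  set μ : Measure ℝ := Measure.map f μ0 with hμ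
  set ν : Measure ℝ := Measure.map g μ0 with hν
  have hμprob : IsProbabilityMeasure μ := Measure.isProbabilityMeasure_map hf.aemeasurable
  have hνprob : IsProbabilityMeasure ν := Measure.isProbabilityMeasure_map hg.aemeasurable
  have hC : (0:ℝ) ≤ C := le_trans (hf0 0 (by norm_num)) (hfbd 0 (by norm_num))
  -- a.e. support in [0, C]
  have hsuppf : ∀ᵐ x ∂μ, x ∈ Set.Icc (0:ℝ) C := by
    rw [hμ]
    refine (MeasureTheory.ae_map_iff hf.aemeasurable measurableSet_Icc).2 ?_
    rw [hμ0, ae_restrict_iff' measurableSet_Icc]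
    exact ae_of_all _ fun x hx => ⟨hf0 x hx, hfbd x hx⟩
  have hsuppg : ∀ᵐ x ∂ν, x ∈ Set.Icc (0:ℝ) C := by
    rw [hν]
    refine (MeasureTheory.ae_map_iff hg.aemeasurable measurableSet_Icc).2 ?_
    rw [hμ0, ae_restrict_iff' measurableSet_Icc]
    exact ae_of_all _ fun x hx => ⟨hg0 x hx, hgbd x hx⟩
  -- integrability of powers
  have hintpow : ∀ (m : Measure ℝ), IsFiniteMeasure m → (∀ᵐ x ∂m, x ∈ Set.Icc (0:ℝ) C) →
      ∀ n : ℕ, Integrable (fun x : ℝ => x ^ n) m := by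
    intro m _ hm n
    refine Integrable.mono' (integrable_const (C ^ n))
      (measurable_id.pow_const n).aestronglyMeasurable ?_
    filter_upwards [hm] with x hx
    rw [Real.norm_eq_abs, abs_pow, abs_of_nonneg hx.1]
    exact pow_le_pow_left₀ hx.1 hx.2 n
  -- equal moments for map measures
  have hmom' : ∀ n : ℕ, ∫ x, x ^ n ∂μ = ∫ x, x ^ n ∂ν := by
    intro n
    rw [hμ, hν, integral_map hf.aemeasurable
        (Continuous.aestronglyMeasurable (by continuity)),
      integral_map hg.aemeasurable (Continuous.aestronglyMeasurable (by continuity))]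
    exact hmom n
  -- equal integrals of polynomials
  have hpoly : ∀ p : Polynomial ℝ, ∫ x, p.eval x ∂μ = ∫ x, p.eval x ∂ν := by
    intro p
    have hev : ∀ x : ℝ, p.eval x =
        ∑ i ∈ Finset.range (p.natDegree + 1), p.coeff i * x ^ i := by
      intro x
      rw [Polynomial.eval_eq_sum_range]
    simp only [hev]
    rw [integral_finset_sum _ (fun i _ =>
        (hintpow μ inferInstance hsuppf i).const_mul _),
      integral_finset_sum _ (fun i _ =>
        (hintpow ν inferInstance hsuppg i).const_mul _)]
    refine Finset.sum_congr rfl fun i _ => ?_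
    rw [integral_const_mul, integral_const_mul, hmom' i]
  -- integrability of continuous functions
  have hintc : ∀ (k : ℝ → ℝ), Continuous k → ∀ (m : Measure ℝ), IsFiniteMeasure m →
      (∀ᵐ x ∂m, x ∈ Set.Icc (0:ℝ) C) → Integrable k m := by
    intro k hk m _ hm
    obtain ⟨M, hM⟩ := (isCompact_Icc (a := (0:ℝ)) (b := C)).exists_bound_of_continuousOn
      hk.continuousOn
    refine Integrable.mono' (integrable_const M) hk.aestronglyMeasurable ?_
    filter_upwards [hm] with x hx using hM x hx
  -- equal integrals of continuous functions
  have hcont : ∀ h : ℝ → ℝ, Continuous h → ∫ x, h x ∂μ = ∫ x, h x ∂ν := by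
    intro h hh
    have key : ∀ ε : ℝ, 0 < ε → |∫ x, h x ∂μ - ∫ x, h x ∂ν| ≤ ε := by
      intro ε hε
      obtain ⟨p, hp⟩ := exists_polynomial_near_of_continuousOn 0 C h hh.continuousOn
        (ε / 2) (by linarith)
      have hd : ∀ (m : Measure ℝ), IsProbabilityMeasure m →
          (∀ᵐ x ∂m, x ∈ Set.Icc (0:ℝ) C) →
          |∫ x, h x ∂m - ∫ x, p.eval x ∂m| ≤ ε / 2 := by
        intro m hmp hm
        rw [← integral_sub (hintc h hh m inferInstance hm)
          (hintc _ p.continuous m inferInstance hm), ← Real.norm_eq_abs]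
        have hb : ∀ᵐ x ∂m, ‖h x - p.eval x‖ ≤ ε / 2 := by
          filter_upwards [hm] with x hx
          rw [Real.norm_eq_abs, abs_sub_comm]
          exact le_of_lt (hp x hx)
        calc ‖∫ x, (h x - p.eval x) ∂m‖ ≤ ε / 2 * (m Set.univ).toReal :=
              norm_integral_le_of_norm_le_const hb
          _ = ε / 2 := by rw [measure_univ]; simp
      have e1 := hd μ hμprob hsuppf
      have e2 := hd ν hνprob hsuppg
      have e3 := hpoly p
      calc |∫ x, h x ∂μ - ∫ x, h x ∂ν|
          = |(∫ x, h x ∂μ - ∫ x, p.eval x ∂μ) - (∫ x, h x ∂ν - ∫ x, p.eval x ∂ν)| := by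
            rw [e3]; ring_nf
        _ ≤ |∫ x, h x ∂μ - ∫ x, p.eval x ∂μ| + |∫ x, h x ∂ν - ∫ x, p.eval x ∂ν| :=
            abs_sub _ _
        _ ≤ ε / 2 + ε / 2 := add_le_add e1 e2
        _ = ε := by ring
    by_contra hne
    have h1 : 0 < |∫ x, h x ∂μ - ∫ x, h x ∂ν| := by
      rw [abs_pos, sub_ne_zero]
      exact hne
    have := key (|∫ x, h x ∂μ - ∫ x, h x ∂ν| / 2) (by linarith)
    linarith
  -- conclude μ = ν
  refine ext_of_forall_lintegral_eq_of_IsFiniteMeasure ?_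
  intro F
  have hFint : ∀ (m : Measure ℝ), IsFiniteMeasure m →
      Integrable (fun x => (F x : ℝ)) m := by
    intro m _
    obtain ⟨D, hD⟩ := F.bounded
    refine Integrable.mono' (integrable_const ((F 0 : ℝ) + D))
      (NNReal.continuous_coe.comp F.continuous).aestronglyMeasurable ?_
    refine ae_of_all _ fun x => ?_
    rw [Real.norm_eq_abs, abs_of_nonneg (F x).coe_nonneg]
    have h1 : (F x : ℝ) - (F 0 : ℝ) ≤ dist (F x) (F 0) := by
      rw [NNReal.dist_eq]
      exact le_abs_self _
    have h2 := hD x 0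
    linarith
  rw [lintegral_coe_eq_integral F (hFint μ inferInstance),
    lintegral_coe_eq_integral F (hFint ν inferInstance)]
  congr 1
  exact hcont _ (NNReal.continuous_coe.comp F.continuous)

/-- If two bounded nonnegative measurable functions on `[0,1]` have the same moments
`∫₀¹ fⁿ = ∫₀¹ gⁿ` for all `n`, then their nonincreasing rearrangements coincide on `[0,1]`. -/
theorem stmt_2 (f g : ℝ → ℝ) (hf : Measurable f) (hg : Measurable g) (C : ℝ)
    (hfbd : ∀ x ∈ Set.Icc (0:ℝ) 1, f x ≤ C) (hgbd : ∀ x ∈ Set.Icc (0:ℝ) 1, g x ≤ C)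
    (hf0 : ∀ x ∈ Set.Icc (0:ℝ) 1, 0 ≤ f x) (hg0 : ∀ x ∈ Set.Icc (0:ℝ) 1, 0 ≤ g x)
    (hmom : ∀ n : ℕ, ∫ x in Set.Icc (0:ℝ) 1, (f x) ^ n = ∫ x in Set.Icc (0:ℝ) 1, (g x) ^ n) :
    ∀ x ∈ Set.Icc (0:ℝ) 1, decRearr f x = decRearr g x := by
  have hmap := aux_map_eq f g hf hg C hfbd hgbd hf0 hg0 hmom
  have hlevel : ∀ y : ℝ, volume {t ∈ Set.Icc (0:ℝ) 1 | y < f t}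
      = volume {t ∈ Set.Icc (0:ℝ) 1 | y < g t} := by
    intro y
    have h1 : {t ∈ Set.Icc (0:ℝ) 1 | y < f t} = f ⁻¹' (Set.Ioi y) ∩ Set.Icc (0:ℝ) 1 := by
      ext t
      rw [Set.mem_sep_iff, Set.mem_inter_iff, Set.mem_preimage, Set.mem_Ioi, and_comm]
    have h2 : {t ∈ Set.Icc (0:ℝ) 1 | y < g t} = g ⁻¹' (Set.Ioi y) ∩ Set.Icc (0:ℝ) 1 := by
      ext t
      rw [Set.mem_sep_iff, Set.mem_inter_iff, Set.mem_preimage, Set.mem_Ioi, and_comm]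
    rw [h1, h2, ← Measure.restrict_apply (hf measurableSet_Ioi),
      ← Measure.restrict_apply (hg measurableSet_Ioi),
      ← Measure.map_apply hf measurableSet_Ioi, ← Measure.map_apply hg measurableSet_Ioi, hmap]
  intro x hx
  unfold decRearr
  by_cases hx1 : x < 1
  · simp only [hx1, if_true]
    congr 1
    ext y
    simp only [Set.mem_setOf_eq]
    rw [hlevel y]
  · simp only [hx1, if_false]
    rw [essInf_eq_sSup, essInf_eq_sSup]
    congr 1
    ext a
    simp only [Set.mem_setOf_eq]
    have h1 : {x | f x < a} = f ⁻¹' (Set.Iio a) := rfl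
    have h2 : {x | g x < a} = g ⁻¹' (Set.Iio a) := rfl
    rw [h1, h2,
      ← Measure.map_apply hf measurableSet_Iio, ← Measure.map_apply hg measurableSet_Iio, hmap]
end

section
/- Let |||·||| be a seminorm on a von Neumann algebra M. Then |||·||| is unitarily invariant (|||UTV||| = |||T||| for all unitaries U, V and all T) if and only if |||ATB||| ≤ ‖A‖ · |||T||| · ‖B‖ for all A, T, B in M. -/
open scoped ComplexOrder

/-- The absolute value `|T| = (T*T)^{1/2}` of a bounded operator on a Hilbert space. -/
noncomputable def opAbs {H : Type} [NormedAddCommGroup H] [InnerProductSpace ℂ H]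
    [CompleteSpace H] (T : H →L[ℂ] H) : H →L[ℂ] H := CFC.sqrt (star T * T)

/-- `τ` is a faithful tracial state on the von Neumann algebra `M`. -/
structure IsFaithfulTracialState {H : Type} [NormedAddCommGroup H] [InnerProductSpace ℂ H]
    [CompleteSpace H] (M : VonNeumannAlgebra H) (τ : (H →L[ℂ] H) → ℂ) : Prop where
  map_add : ∀ S T, τ (S + T) = τ S + τ T
  map_smul : ∀ (c : ℂ) (T), τ (c • T) = c * τ T
  map_one : τ 1 = 1
  pos : ∀ T ∈ M, 0 ≤ τ (star T * T)
  faithful : ∀ T ∈ M, τ (star T * T) = 0 → T = 0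
  tracial : ∀ S ∈ M, ∀ T ∈ M, τ (S * T) = τ (T * S)

/-!
Kadison–Pedersen: if `‖c‖ < 1`, then `n • c` is a sum of `n + 2` unitaries. Starting from
`1 + (-1) = 0`, each step replaces one unitary `u` by two unitaries with sum `u + c`; this is
possible because `d = (u + c) / 2` is invertible with `‖d‖ ≤ 1`, so `d = v |d|` with `v` unitary,
and `|d|` is the real part of the unitary `|d| + i √(1 - |d|²)`. Hence a seminorm bounded by `C`
on unitaries satisfies `n q(c) ≤ (n + 2) C`, so `q ≤ C` on the open unit ball and `q(a) ≤ C ‖a‖`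
by scaling. Applied to `a ↦ ν(a T)` and `b ↦ ν(T b)` in the C⋆-algebra `M`, this gives the
forward direction; the converse follows from `ν(T) = ν(U⋆ (U T V) V⋆)`.
-/

section CStarAlgebra

variable {A : Type*} [CStarAlgebra A]

lemma Unitary.norm_le_one {u : A} (hu : u ∈ unitary A) : ‖u‖ ≤ 1 := by
  rcases subsingleton_or_nontrivial A with _ | _
  · simp [Subsingleton.elim u 0]
  · exact (CStarRing.norm_of_mem_unitary hu).le

lemma IsSelfAdjoint.exists_unitary_add_star_eq_add_self {a : A} (ha : IsSelfAdjoint a)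
    (h : ‖a‖ ≤ 1) : ∃ w ∈ unitary A, w + star w = a + a := by
  let _ := CStarAlgebra.spectralOrder A
  let _ := CStarAlgebra.spectralOrderedRing A
  refine ⟨_, ha.self_add_I_smul_cfcSqrt_sub_sq_mem_unitary a h, ?_⟩
  have hs : IsSelfAdjoint (CFC.sqrt (1 - a ^ 2 : A)) := (CFC.sqrt_nonneg _).isSelfAdjoint
  simp only [star_add, star_smul, ha.star_eq, hs.star_eq, Complex.star_def, Complex.conj_I,
    neg_smul]
  abel

lemma IsUnit.exists_unitary_mul_eq {d p : A} (hd : IsUnit d) (hp : IsSelfAdjoint p)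
    (hpd : p * p = star d * d) : ∃ v ∈ unitary A, v * p = d := by
  obtain ⟨P, rfl⟩ : IsUnit p := ((Commute.refl p).isUnit_mul_iff.mp (hpd ▸ hd.star.mul hd)).1
  refine ⟨d * ↑P⁻¹, ?_, by simp [mul_assoc]⟩
  refine (hd.mul P⁻¹.isUnit).mem_unitary_iff_star_mul_self.mpr ?_
  calc star (d * ↑P⁻¹) * (d * ↑P⁻¹) = star (↑P⁻¹ : A) * (star d * d) * ↑P⁻¹ := by
        rw [star_mul]; noncomm_ring
    _ = star (↑P * ↑P⁻¹ : A) := by rw [← hpd, star_mul, hp.star_eq]; simp [mul_assoc]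
    _ = 1 := by simp

lemma IsUnit.exists_unitary_add_unitary_eq_add_self {d : A} (hd : IsUnit d) (h : ‖d‖ ≤ 1) :
    ∃ w₁ ∈ unitary A, ∃ w₂ ∈ unitary A, w₁ + w₂ = d + d := by
  let _ := CStarAlgebra.spectralOrder A
  let _ := CStarAlgebra.spectralOrderedRing A
  set p := CFC.sqrt (star d * d)
  have hp : IsSelfAdjoint p := (CFC.sqrt_nonneg _).isSelfAdjoint
  have hpd : p * p = star d * d := CFC.sqrt_mul_sqrt_self _ (star_mul_self_nonneg d)
  have hpn : ‖p‖ ≤ 1 := by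
    rw [← sq_le_one_iff₀ (norm_nonneg p), ← hp.norm_mul_self, hpd, CStarRing.norm_star_mul_self]
    exact mul_le_one₀ h (norm_nonneg d) h
  obtain ⟨v, hv, hvp⟩ := hd.exists_unitary_mul_eq hp hpd
  obtain ⟨w, hw, hww⟩ := hp.exists_unitary_add_star_eq_add_self hpn
  refine ⟨v * w, mul_mem hv hw, v * star w, mul_mem hv (Unitary.star_mem hw), ?_⟩
  rw [← mul_add, hww, mul_add, hvp]

lemma exists_unitary_add_unitary_eq_unitary_add {u c : A} (hu : u ∈ unitary A) (hc : ‖c‖ < 1) :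
    ∃ w₁ ∈ unitary A, ∃ w₂ ∈ unitary A, w₁ + w₂ = u + c := by
  set d := (2⁻¹ : ℂ) • (u + c)
  have hdd : d + d = u + c := by simp only [d, ← two_smul ℂ, smul_smul]; norm_num
  have hd : IsUnit d := by
    have h1 : IsUnit (1 - -(star u * c)) := by
      refine isUnit_one_sub_of_norm_lt_one ?_
      rwa [norm_neg, CStarRing.norm_mem_unitary_mul _ (Unitary.star_mem hu)]
    have h2 : u + c = u * (1 - -(star u * c)) := by
      rw [sub_neg_eq_add, mul_add, mul_one, ← mul_assoc, Unitary.mul_star_self_of_mem hu,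
        one_mul]
    rw [show d = (2⁻¹ : ℂ) • (u + c) from rfl, h2, Algebra.smul_def]
    exact ((isUnit_iff_ne_zero.mpr (by norm_num)).map _).mul
      ((Unitary.isUnit_coe (U := ⟨u, hu⟩)).mul h1)
  have hdn : ‖d‖ ≤ 1 := by
    have := (norm_add_le u c).trans (add_le_add (Unitary.norm_le_one hu) hc.le)
    rw [norm_smul, norm_inv, Complex.norm_ofNat]
    linarith
  obtain ⟨w₁, hw₁, w₂, hw₂, h⟩ := hd.exists_unitary_add_unitary_eq_add_self hdn
  exact ⟨w₁, hw₁, w₂, hw₂, h.trans hdd⟩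

lemma exists_multiset_unitary_sum_eq_nsmul {c : A} (hc : ‖c‖ < 1) (n : ℕ) :
    ∃ s : Multiset A, (∀ u ∈ s, u ∈ unitary A) ∧ Multiset.card s = n + 2 ∧ s.sum = n • c := by
  induction n with
  | zero =>
    refine ⟨{1, -1}, ?_, by simp, by simp⟩
    simpa [one_mem] using Unitary.mem_iff.mpr ⟨by simp, by simp⟩
  | succ n ih =>
    obtain ⟨s, hs, hcard, hsum⟩ := ih
    obtain ⟨u, hu⟩ := Multiset.card_pos_iff_exists_mem.mp (by omega : 0 < Multiset.card s)
    obtain ⟨t, rfl⟩ := Multiset.exists_cons_of_mem hu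
    obtain ⟨w₁, hw₁, w₂, hw₂, hw⟩ := exists_unitary_add_unitary_eq_unitary_add (hs u hu) hc
    refine ⟨w₁ ::ₘ w₂ ::ₘ t, ?_, by simpa using hcard, ?_⟩
    · simp only [Multiset.mem_cons]
      rintro v (rfl | rfl | hv)
      exacts [hw₁, hw₂, hs v (Multiset.mem_cons_of_mem hv)]
    · rw [Multiset.sum_cons, Multiset.sum_cons, ← add_assoc, hw, succ_nsmul, ← hsum,
        Multiset.sum_cons]
      abel

namespace Seminorm

lemma le_of_forall_unitary_le_of_norm_lt_one (q : Seminorm ℂ A) {C : ℝ}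
    (h : ∀ u ∈ unitary A, q u ≤ C) {c : A} (hc : ‖c‖ < 1) : q c ≤ C := by
  have hbound (n : ℕ) : n * q c ≤ (n + 2) * C := by
    obtain ⟨s, hs, hcard, hsum⟩ := exists_multiset_unitary_sum_eq_nsmul hc n
    calc n * q c = q (n • c) := by rw [← Nat.cast_smul_eq_nsmul ℂ, map_smul_eq_mul]; simp
      _ ≤ (s.map q).sum :=
          hsum ▸ Multiset.le_sum_of_subadditive q (map_zero q).le (map_add_le_add q) s
      _ ≤ Multiset.card (s.map q) • C :=
          Multiset.sum_le_card_nsmul _ _ (by simpa using fun u hu => h u (hs u hu))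
      _ = (n + 2) * C := by rw [Multiset.card_map, hcard, nsmul_eq_mul]; push_cast; ring
  by_contra! hlt
  obtain ⟨n, hn⟩ := exists_nat_gt (2 * C / (q c - C))
  rw [div_lt_iff₀ (sub_pos.mpr hlt)] at hn
  nlinarith [hbound n]

lemma le_mul_norm_of_forall_unitary_le (q : Seminorm ℂ A) {C : ℝ}
    (h : ∀ u ∈ unitary A, q u ≤ C) (a : A) : q a ≤ C * ‖a‖ := by
  refine ge_of_tendsto (tendsto_nhdsWithin_of_tendsto_nhds (s := Set.Ioi ‖a‖)
    ((continuous_const_mul C).tendsto ‖a‖)) ?_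
  filter_upwards [self_mem_nhdsWithin] with r (hr : ‖a‖ < r)
  have hr0 : 0 < r := (norm_nonneg a).trans_lt hr
  have hsmall : ‖(r⁻¹ : ℂ) • a‖ < 1 := by
    rwa [norm_smul, norm_inv, Complex.norm_real, Real.norm_of_nonneg hr0.le, inv_mul_lt_one₀ hr0]
  calc q a = r * q ((r⁻¹ : ℂ) • a) := by
        rw [map_smul_eq_mul, norm_inv, Complex.norm_real, Real.norm_of_nonneg hr0.le,
          mul_inv_cancel_left₀ hr0.ne']
    _ ≤ r * C := by gcongr; exact q.le_of_forall_unitary_le_of_norm_lt_one h hsmall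
    _ = C * r := mul_comm r C

lemma le_norm_mul_of_forall_unitary_mul_le (p : Seminorm ℂ A) {x : A}
    (h : ∀ u ∈ unitary A, p (u * x) ≤ p x) (a : A) : p (a * x) ≤ ‖a‖ * p x := by
  simpa [mul_comm] using (p.comp (LinearMap.mulRight ℂ x)).le_mul_norm_of_forall_unitary_le h a

lemma le_mul_norm_of_forall_mul_unitary_le (p : Seminorm ℂ A) {x : A}
    (h : ∀ v ∈ unitary A, p (x * v) ≤ p x) (b : A) : p (x * b) ≤ p x * ‖b‖ :=
  (p.comp (LinearMap.mulLeft ℂ x)).le_mul_norm_of_forall_unitary_le h b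

def IsUnitarilyInvariant (p : Seminorm ℂ A) : Prop :=
  ∀ u ∈ unitary A, ∀ v ∈ unitary A, ∀ x, p (u * x * v) = p x

lemma IsUnitarilyInvariant.le_norm_mul_mul_norm {p : Seminorm ℂ A}
    (hp : p.IsUnitarilyInvariant) (a x b : A) : p (a * x * b) ≤ ‖a‖ * p x * ‖b‖ := by
  have hleft : p (a * x) ≤ ‖a‖ * p x :=
    p.le_norm_mul_of_forall_unitary_mul_le
      (fun u hu => by simpa using (hp u hu 1 (one_mem _) x).le) a
  calc p (a * x * b) ≤ p (a * x) * ‖b‖ :=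
        p.le_mul_norm_of_forall_mul_unitary_le
          (fun v hv => by simpa using (hp 1 (one_mem _) v hv _).le) b
    _ ≤ ‖a‖ * p x * ‖b‖ := by gcongr

lemma isUnitarilyInvariant_of_le_norm_mul_mul_norm {p : Seminorm ℂ A}
    (h : ∀ a x b, p (a * x * b) ≤ ‖a‖ * p x * ‖b‖) : p.IsUnitarilyInvariant := by
  have hle {u v : A} (hu : u ∈ unitary A) (hv : v ∈ unitary A) (x : A) : p (u * x * v) ≤ p x :=
    calc p (u * x * v) ≤ ‖u‖ * p x * ‖v‖ := h u x v
      _ ≤ 1 * p x * 1 := by gcongr <;> exact Unitary.norm_le_one ‹_›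
      _ = p x := by ring
  intro u hu v hv x
  refine le_antisymm (hle hu hv x) ?_
  calc p x = p (star u * (u * x * v) * star v) := by
        rw [mul_assoc, mul_assoc, Unitary.mul_star_self_of_mem hv, mul_one, ← mul_assoc,
          Unitary.star_mul_self_of_mem hu, one_mul]
    _ ≤ p (u * x * v) := hle (Unitary.star_mem hu) (Unitary.star_mem hv) _

lemma isUnitarilyInvariant_iff (p : Seminorm ℂ A) :
    p.IsUnitarilyInvariant ↔ ∀ a x b, p (a * x * b) ≤ ‖a‖ * p x * ‖b‖ :=
  ⟨IsUnitarilyInvariant.le_norm_mul_mul_norm, isUnitarilyInvariant_of_le_norm_mul_mul_norm⟩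

end Seminorm

end CStarAlgebra

lemma StarSubalgebra.coe_mem_unitary_iff {R B : Type*} [CommSemiring R] [StarRing R] [Semiring B]
    [StarRing B] [Algebra R B] [StarModule R B] {S : StarSubalgebra R B} {u : S} :
    u ∈ unitary S ↔ (u : B) ∈ unitary B := by
  simp [Unitary.mem_iff, Subtype.ext_iff]

theorem stmt_9_general {H : Type} [NormedAddCommGroup H] [InnerProductSpace ℂ H] [CompleteSpace H]
    (M : VonNeumannAlgebra H) (ν : (H →L[ℂ] H) → ℝ)
    (hνadd : ∀ S ∈ M, ∀ T ∈ M, ν (S + T) ≤ ν S + ν T)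
    (hνsmul : ∀ (c : ℂ), ∀ T ∈ M, ν (c • T) = ‖c‖ * ν T) :
    (∀ U ∈ M, U ∈ unitary (H →L[ℂ] H) → ∀ V ∈ M, V ∈ unitary (H →L[ℂ] H) →
        ∀ T ∈ M, ν (U * T * V) = ν T) ↔
      (∀ A ∈ M, ∀ T ∈ M, ∀ B ∈ M, ν (A * T * B) ≤ ‖A‖ * ν T * ‖B‖) := by
  have : IsClosed (M.toStarSubalgebra : Set (H →L[ℂ] H)) :=
    M.centralizer_centralizer ▸ Set.isClosed_centralizer _
  let p : Seminorm ℂ M.toStarSubalgebra :=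
    .of (fun T => ν T) (fun S T => hνadd _ S.2 _ T.2) (fun c T => hνsmul c _ T.2)
  have hp (T : M.toStarSubalgebra) : p T = ν T := rfl
  simpa [Seminorm.IsUnitarilyInvariant, StarSubalgebra.coe_mem_unitary_iff, hp] using
    p.isUnitarilyInvariant_iff

/-- A seminorm on a von Neumann algebra `M` is unitarily invariant
(`|||UTV||| = |||T|||` for unitaries `U, V ∈ M`) iff
`|||ATB||| ≤ ‖A‖ |||T||| ‖B‖` for all `A, T, B ∈ M`. -/
theorem stmt_9 {H : Type} [NormedAddCommGroup H] [InnerProductSpace ℂ H] [CompleteSpace H]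
    (M : VonNeumannAlgebra H) (ν : (H →L[ℂ] H) → ℝ)
    (hν0 : ∀ T ∈ M, 0 ≤ ν T)
    (hνadd : ∀ S ∈ M, ∀ T ∈ M, ν (S + T) ≤ ν S + ν T)
    (hνsmul : ∀ (c : ℂ), ∀ T ∈ M, ν (c • T) = ‖c‖ * ν T) :
    (∀ U ∈ M, U ∈ unitary (H →L[ℂ] H) → ∀ V ∈ M, V ∈ unitary (H →L[ℂ] H) →
        ∀ T ∈ M, ν (U * T * V) = ν T) ↔
      (∀ A ∈ M, ∀ T ∈ M, ∀ B ∈ M, ν (A * T * B) ≤ ‖A‖ * ν T * ‖B‖) :=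
  stmt_9_general M ν hνadd hνsmul
end

section
/- The extreme points of the set Γ = {(x₁,…,xₙ) ∈ ℝⁿ : x₁ ≥ x₂ ≥ ⋯ ≥ x_k = x_{k+1} = ⋯ = xₙ ≥ 0 and (x₁+⋯+x_k)/k ≤ 1} are exactly the k+1 points (k,0,…,0), (k/2, k/2, 0,…,0), …, (k/(k−1),…,k/(k−1),0,…,0), (1,1,…,1), and (0,0,…,0). -/
/-!
Γ is convex, so its extreme points are exactly the listed points once Γ lies in their convex
hull and each of them is extreme. For `x ∈ Γ` put `a_m = x_m` for `m < k` and `a_k = 0`; Abel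
summation writes `x` as `∑_{j<k} ((j+1)/k) (a_j - a_{j+1})` times the vertex with `j+1` entries
`k/(j+1)`, with total weight `(a_0 + ⋯ + a_{k-1})/k ≤ 1`; the remaining weight goes to `0`.
Conversely, `j x_{j-1} ≤ x_0 + ⋯ + x_{k-1} ≤ k` on Γ, with equality only at the vertex with `j`
entries `k/j`, so that vertex is exposed by the coordinate `x_{j-1}`; and `0` is exposed by `-x_0`.
-/

open Finset

section Staircase

variable {a : ℕ → ℝ} {j k : ℕ}

theorem sum_range_ite_lt (c : ℝ) (hjk : j ≤ k) :
    ∑ m ∈ range k, (if m < j then c else 0) = j * c := by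
  rw [← sum_filter, show (range k).filter (· < j) = range j by ext; simp; omega]
  simp

theorem sum_range_ite_le_sub (a : ℕ → ℝ) {m : ℕ} (hmk : m ≤ k) :
    ∑ j ∈ range k, (if m ≤ j then a j - a (j + 1) else 0) = a m - a k := by
  rw [← sum_filter, show (range k).filter (m ≤ ·) = Ico m k by ext; simp; omega,
    ← neg_sub, ← sum_Ico_sub _ hmk, ← sum_neg_distrib]
  simp

theorem sum_range_succ_mul_sub (a : ℕ → ℝ) (k : ℕ) :
    ∑ j ∈ range k, ((j : ℝ) + 1) * (a j - a (j + 1)) = ∑ j ∈ range k, a j - k * a k := by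
  induction k with
  | zero => simp
  | succ k ih => rw [sum_range_succ, sum_range_succ, ih]; push_cast; ring

theorem Antitone.ite_le (ha : Antitone a) (h0 : 0 ≤ a) (m : ℕ) :
    (if m < j then a (j - 1) else 0) ≤ a m := by
  split_ifs with h
  · exact ha (by omega)
  · exact h0 m

theorem Antitone.mul_le_sum_range (ha : Antitone a) (h0 : 0 ≤ a) (hjk : j ≤ k) :
    j * a (j - 1) ≤ ∑ m ∈ range k, a m := by
  rw [← sum_range_ite_lt _ hjk]
  exact sum_le_sum fun m _ => ha.ite_le h0 m

theorem Antitone.eq_ite_of_sum_range_le (ha : Antitone a) (h0 : 0 ≤ a) (hjk : j ≤ k)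
    (h : ∑ m ∈ range k, a m ≤ j * a (j - 1)) {m : ℕ} (hm : m < k) :
    a m = if m < j then a (j - 1) else 0 := by
  have hle : ∀ m ∈ range k, (if m < j then a (j - 1) else 0) ≤ a m :=
    fun m _ => ha.ite_le h0 m
  have heq := (sum_eq_sum_iff_of_le hle).1 <|
    (sum_le_sum hle).antisymm (h.trans_eq (sum_range_ite_lt _ hjk).symm)
  exact (heq m (mem_range.2 hm)).symm

end Staircase

section ConvexCombination

variable {𝕜 E ι : Type*} [Field 𝕜] [LinearOrder 𝕜] [IsStrictOrderedRing 𝕜] [AddCommGroup E]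
  [Module 𝕜 E] {C V : Set E}

theorem Convex.sum_smul_mem_of_zero_mem (hC : Convex 𝕜 C) (h0 : (0 : E) ∈ C) {s : Finset ι}
    {w : ι → 𝕜} {p : ι → E} (hw₀ : ∀ i ∈ s, 0 ≤ w i) (hw₁ : ∑ i ∈ s, w i ≤ 1)
    (hp : ∀ i ∈ s, p i ∈ C) : ∑ i ∈ s, w i • p i ∈ C := by
  rcases (sum_nonneg hw₀).eq_or_lt with hW | hW
  · rw [sum_eq_zero fun i hi => by rw [(sum_eq_zero_iff_of_nonneg hw₀).1 hW.symm i hi, zero_smul]]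
    exact h0
  · have := (hC.starConvex h0).smul_mem (hC.centerMass_mem hw₀ hW hp) hW.le hw₁
    rwa [centerMass, smul_inv_smul₀ hW.ne'] at this

theorem Convex.extremePoints_eq (hC : Convex 𝕜 C) (hV : V ⊆ C.extremePoints 𝕜)
    (hCV : C ⊆ convexHull 𝕜 V) : C.extremePoints 𝕜 = V := by
  have : convexHull 𝕜 V = C :=
    (convexHull_min (hV.trans extremePoints_subset) hC).antisymm hCV
  exact (this ▸ extremePoints_convexHull_subset).antisymm hV

end ConvexCombination

theorem Nat.sub_one_lt_of_one_le_of_le {n k : ℕ} (hk1 : 1 ≤ k) (hkn : k ≤ n) : n - 1 < n := by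
  omega

def Γ {n k : ℕ} (hk1 : 1 ≤ k) (hkn : k ≤ n) : Set (Fin n → ℝ) :=
  {x : Fin n → ℝ | Antitone x ∧
    (∀ i : Fin n, k - 1 ≤ (i : ℕ) → x i = x ⟨k - 1, Nat.sub_one_lt_of_le hk1 hkn⟩) ∧
    0 ≤ x ⟨n - 1, Nat.sub_one_lt_of_one_le_of_le hk1 hkn⟩ ∧
    (∑ i ∈ Finset.univ.filter (fun i : Fin n => (i : ℕ) < k), x i) / k ≤ 1}

def prefixSeq {n : ℕ} (k : ℕ) (x : Fin n → ℝ) (m : ℕ) : ℝ :=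
  if h : m < k ∧ m < n then x ⟨m, h.2⟩ else 0

theorem prefixSeq_of_lt {n k m : ℕ} (x : Fin n → ℝ) (hm : m < k) (hmn : m < n) :
    prefixSeq k x m = x ⟨m, hmn⟩ :=
  dif_pos ⟨hm, hmn⟩

theorem prefixSeq_self {n : ℕ} (k : ℕ) (x : Fin n → ℝ) : prefixSeq k x k = 0 :=
  dif_neg fun h => h.1.false

/-- Clamping the index at `k - 1` makes `vertex n k k` the all-ones vector rather than the
indicator of the first `k` coordinates. -/
noncomputable def vertex (n k j : ℕ) : Fin n → ℝ :=
  fun i => if min (i : ℕ) (k - 1) < j then (k : ℝ) / j else 0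

theorem vertex_of_lt {n k j : ℕ} (hjk : j < k) :
    vertex n k j = fun i : Fin n => if (i : ℕ) < j then (k : ℝ) / j else 0 := by
  funext i
  simp only [vertex, show min (i : ℕ) (k - 1) < j ↔ (i : ℕ) < j by omega]

theorem vertex_self {n k : ℕ} (hk : 1 ≤ k) : vertex n k k = fun _ => 1 := by
  funext i
  rw [vertex, if_pos (by omega), div_self (by positivity)]

theorem insert_zero_image_vertex {n k : ℕ} (hk : 1 ≤ k) :
    insert 0 (vertex n k '' Set.Icc 1 k) =
      (⋃ j ∈ Set.Icc 1 (k - 1),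
        {fun i : Fin n => if (i : ℕ) < j then (k : ℝ) / j else 0}) ∪ {fun _ => 1} ∪ {0} := by
  ext z
  simp only [Set.mem_insert_iff, Set.mem_image, Set.mem_Icc, Set.mem_union, Set.mem_iUnion,
    Set.mem_singleton_iff, exists_prop]
  constructor
  · rintro (rfl | ⟨j, ⟨hj1, hjk⟩, rfl⟩)
    · exact Or.inr rfl
    · rcases hjk.lt_or_eq with hjk | rfl
      · exact Or.inl (Or.inl ⟨j, ⟨hj1, by omega⟩, vertex_of_lt hjk⟩)
      · exact Or.inl (Or.inr (vertex_self hk))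
  · rintro ((⟨j, ⟨hj1, hjk⟩, rfl⟩ | rfl) | rfl)
    · exact Or.inr ⟨j, ⟨hj1, by omega⟩, vertex_of_lt (by omega)⟩
    · exact Or.inr ⟨k, ⟨hk, le_rfl⟩, vertex_self hk⟩
    · exact Or.inl rfl

theorem sum_filter_val_lt {n k : ℕ} (hkn : k ≤ n) (f : ℕ → ℝ) :
    ∑ i ∈ univ.filter (fun i : Fin n => (i : ℕ) < k), f i = ∑ m ∈ range k, f m := by
  rw [sum_filter, Fin.sum_univ_eq_sum_range (fun m => if m < k then f m else 0), ← sum_filter,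
    show (range n).filter (· < k) = range k by ext; simp; omega]

namespace Γ

variable {n k j : ℕ} {hk1 : 1 ≤ k} {hkn : k ≤ n} {x : Fin n → ℝ}

theorem nonneg (hx : x ∈ Γ hk1 hkn) (i : Fin n) : 0 ≤ x i :=
  hx.2.2.1.trans <| hx.1 <| Fin.le_iff_val_le_val.2 <| by simp only; omega

theorem apply_eq_prefixSeq (hx : x ∈ Γ hk1 hkn) (i : Fin n) :
    x i = prefixSeq k x (min i (k - 1)) := by
  rw [prefixSeq_of_lt x (by omega) (by omega)]
  rcases le_total (i : ℕ) (k - 1) with h | h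
  · simp [min_eq_left h]
  · simp only [min_eq_right h]
    exact hx.2.1 i h

theorem antitone_prefixSeq (hx : x ∈ Γ hk1 hkn) : Antitone (prefixSeq k x) := by
  intro m m' hm
  unfold prefixSeq
  split_ifs
  · exact hx.1 (Fin.mk_le_mk.2 hm)
  · omega
  · exact nonneg hx _
  · exact le_rfl

theorem prefixSeq_nonneg (hx : x ∈ Γ hk1 hkn) : 0 ≤ prefixSeq k x := by
  intro m
  unfold prefixSeq
  split_ifs
  exacts [nonneg hx _, le_rfl]

theorem sum_prefixSeq_le (hx : x ∈ Γ hk1 hkn) : ∑ m ∈ range k, prefixSeq k x m ≤ k := by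
  have hk : (0 : ℝ) < k := by exact_mod_cast hk1
  calc ∑ m ∈ range k, prefixSeq k x m
      = ∑ i ∈ univ.filter (fun i : Fin n => (i : ℕ) < k), x i := by
        rw [← sum_filter_val_lt hkn]
        exact sum_congr rfl fun i hi => by rw [prefixSeq_of_lt x (mem_filter.1 hi).2]
    _ ≤ k := (div_le_one hk).1 hx.2.2.2

theorem convex : Convex ℝ (Γ hk1 hkn) := by
  have hk : (0 : ℝ) < k := by exact_mod_cast hk1
  rintro x ⟨hx₁, hx₂, hx₃, hx₄⟩ y ⟨hy₁, hy₂, hy₃, hy₄⟩ a b ha hb hab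
  rw [div_le_one hk] at hx₄ hy₄
  refine ⟨?_, fun i hi => ?_, ?_, ?_⟩
  · exact (hx₁.const_mul ha).add (hy₁.const_mul hb)
  · simp [hx₂ i hi, hy₂ i hi]
  · simp only [Pi.add_apply, Pi.smul_apply, smul_eq_mul]
    exact add_nonneg (mul_nonneg ha hx₃) (mul_nonneg hb hy₃)
  · rw [div_le_one hk]
    simp only [Pi.add_apply, Pi.smul_apply, smul_eq_mul, sum_add_distrib, ← mul_sum]
    nlinarith

theorem zero_mem : (0 : Fin n → ℝ) ∈ Γ hk1 hkn :=
  ⟨antitone_const, fun _ _ => rfl, le_rfl, by simp⟩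

theorem vertex_mem (hj1 : 1 ≤ j) (hjk : j ≤ k) : vertex n k j ∈ Γ hk1 hkn := by
  have hj : (j : ℝ) ≠ 0 := by positivity
  have hk : (0 : ℝ) < k := by exact_mod_cast hk1
  refine ⟨fun i i' hi => ?_, fun i hi => ?_, ?_, ?_⟩
  · have : min (i : ℕ) (k - 1) ≤ min (i' : ℕ) (k - 1) := min_le_min_right _ hi
    unfold vertex
    split_ifs <;> first | omega | positivity | exact le_rfl
  · simp only [vertex, min_eq_right hi, min_self]
  · unfold vertex
    split_ifs <;> positivity
  · rw [div_le_one hk]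
    refine le_of_eq ?_
    calc ∑ i ∈ univ.filter (fun i : Fin n => (i : ℕ) < k), vertex n k j i
        = ∑ m ∈ range k, (if min m (k - 1) < j then (k : ℝ) / j else 0) :=
          sum_filter_val_lt hkn fun m => if min m (k - 1) < j then (k : ℝ) / j else 0
      _ = ∑ m ∈ range k, (if m < j then (k : ℝ) / j else 0) :=
          sum_congr rfl fun m hm => by rw [min_eq_left (by simp at hm; omega)]
      _ = k := by rw [sum_range_ite_lt _ hjk, mul_div_cancel₀ _ hj]

theorem zero_mem_exposedPoints : (0 : Fin n → ℝ) ∈ (Γ hk1 hkn).exposedPoints ℝ := by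
  refine ⟨zero_mem, -ContinuousLinearMap.proj (R := ℝ) (φ := fun _ : Fin n => ℝ) ⟨0, by omega⟩,
    fun y hy => ?_⟩
  simp only [neg_apply, ContinuousLinearMap.proj_apply, Pi.zero_apply,
    neg_zero, neg_nonpos, neg_nonneg]
  refine ⟨nonneg hy _, fun h => funext fun i => ?_⟩
  exact le_antisymm ((hy.1 (Fin.le_iff_val_le_val.2 (Nat.zero_le _))).trans h) (nonneg hy i)

theorem vertex_mem_exposedPoints (hj1 : 1 ≤ j) (hjk : j ≤ k) :
    vertex n k j ∈ (Γ hk1 hkn).exposedPoints ℝ := by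
  have hj : (0 : ℝ) < j := by exact_mod_cast hj1
  refine ⟨vertex_mem hj1 hjk,
    ContinuousLinearMap.proj (R := ℝ) (φ := fun _ : Fin n => ℝ) ⟨j - 1, by omega⟩, fun y hy => ?_⟩
  have hb := antitone_prefixSeq hy
  have hb₀ := prefixSeq_nonneg hy
  have hvj : vertex n k j ⟨j - 1, by omega⟩ = k / j := if_pos (by simp; omega)
  have hbound : prefixSeq k y (j - 1) ≤ k / j :=
    (le_div_iff₀' hj).2 <| (hb.mul_le_sum_range hb₀ hjk).trans (sum_prefixSeq_le hy)
  rw [ContinuousLinearMap.proj_apply, ContinuousLinearMap.proj_apply, hvj,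
    ← prefixSeq_of_lt y (by omega : j - 1 < k)]
  refine ⟨hbound, fun h => funext fun i => ?_⟩
  have hsum : ∑ m ∈ range k, prefixSeq k y m ≤ j * prefixSeq k y (j - 1) :=
    (sum_prefixSeq_le hy).trans ((div_le_iff₀' hj).1 h)
  rw [apply_eq_prefixSeq hy, hb.eq_ite_of_sum_range_le hb₀ hjk hsum (by omega),
    hbound.antisymm h, vertex]

theorem sum_smul_vertex_eq (hx : x ∈ Γ hk1 hkn) :
    ∑ j ∈ range k, (((j : ℝ) + 1) / k * (prefixSeq k x j - prefixSeq k x (j + 1))) •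
      vertex n k (j + 1) = x := by
  have hk : (k : ℝ) ≠ 0 := by positivity
  funext i
  simp only [Finset.sum_apply, Pi.smul_apply, smul_eq_mul, vertex]
  calc ∑ j ∈ range k, ((j : ℝ) + 1) / k * (prefixSeq k x j - prefixSeq k x (j + 1)) *
        (if min (i : ℕ) (k - 1) < j + 1 then (k : ℝ) / ↑(j + 1) else 0)
      = ∑ j ∈ range k, (if min (i : ℕ) (k - 1) ≤ j then
          prefixSeq k x j - prefixSeq k x (j + 1) else 0) := sum_congr rfl fun j _ => by
        simp only [Nat.lt_succ_iff, mul_ite, mul_zero]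
        split_ifs
        · push_cast
          field_simp
        · rfl
    _ = x i := by
      rw [sum_range_ite_le_sub _ ((min_le_right _ _).trans (Nat.sub_le k 1)), prefixSeq_self,
        sub_zero, apply_eq_prefixSeq hx]

theorem subset_convexHull :
    Γ hk1 hkn ⊆ convexHull ℝ (insert 0 (vertex n k '' Set.Icc 1 k)) := by
  intro x hx
  have hk : (0 : ℝ) < k := by exact_mod_cast hk1
  have hd : ∀ j, 0 ≤ prefixSeq k x j - prefixSeq k x (j + 1) :=
    fun j => sub_nonneg.2 (antitone_prefixSeq hx j.le_succ)
  rw [← sum_smul_vertex_eq hx]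
  refine (convex_convexHull ℝ _).sum_smul_mem_of_zero_mem
    (_root_.subset_convexHull ℝ _ (Set.mem_insert _ _)) (fun j _ => by have := hd j; positivity) ?_
    fun j hj => _root_.subset_convexHull ℝ _ <| Set.mem_insert_of_mem _
      ⟨j + 1, ⟨by omega, by simp at hj; omega⟩, rfl⟩
  simp only [div_mul_eq_mul_div, ← sum_div]
  rw [sum_range_succ_mul_sub, prefixSeq_self, mul_zero, sub_zero, div_le_one hk]
  exact sum_prefixSeq_le hx

end Γ

/-- The extreme points of
`Γ = {x ∈ ℝⁿ : x₁ ≥ ⋯ ≥ x_k = ⋯ = xₙ ≥ 0, (x₁ + ⋯ + x_k)/k ≤ 1}`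
are exactly the points whose first `j` coordinates are `k/j` and the rest `0`
(for `1 ≤ j ≤ k-1`), the all-ones vector, and the zero vector. -/
theorem stmt_16 (n k : ℕ) (hk1 : 1 ≤ k) (hkn : k ≤ n) :
    Set.extremePoints ℝ
      {x : Fin n → ℝ | Antitone x ∧
        (∀ i : Fin n, k - 1 ≤ (i : ℕ) → x i = x ⟨k - 1, by omega⟩) ∧
        0 ≤ x ⟨n - 1, by omega⟩ ∧
        (∑ i ∈ Finset.univ.filter (fun i : Fin n => (i : ℕ) < k), x i) / k ≤ 1} =
      (⋃ j ∈ Set.Icc 1 (k - 1),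
        {fun i : Fin n => if (i : ℕ) < j then (k : ℝ) / j else 0}) ∪
        {fun _ => 1} ∪ {0} := by
  rw [← insert_zero_image_vertex hk1]
  refine (Γ.convex (hk1 := hk1) (hkn := hkn)).extremePoints_eq ?_ Γ.subset_convexHull
  rw [Set.insert_subset_iff, Set.image_subset_iff]
  exact ⟨exposedPoints_subset_extremePoints Γ.zero_mem_exposedPoints,
    fun j hj => exposedPoints_subset_extremePoints (Γ.vertex_mem_exposedPoints hj.1 hj.2)⟩
end

section
/- Let f : [0,1] → ℝ be a function. There exists a normalized unitarily invariant norm |||·||| on M₂(ℂ) with f(s) = ||| diag(1, s) ||| for all s ∈ [0,1] if and only if f is increasing, convex on [0,1], and satisfies (1+s)/2 ≤ f(s) ≤ 1 for all s ∈ [0,1]. -/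
/-- `N` is a unitarily invariant norm on `M₂(ℂ)`. -/
def IsUINorm (N : Matrix (Fin 2) (Fin 2) ℂ → ℝ) : Prop :=
  (∀ T, 0 ≤ N T) ∧ (∀ T, N T = 0 → T = 0) ∧
  (∀ (c : ℂ) (T), N (c • T) = ‖c‖ * N T) ∧
  (∀ S T, N (S + T) ≤ N S + N T) ∧
  (∀ U ∈ Matrix.unitaryGroup (Fin 2) ℂ, ∀ V ∈ Matrix.unitaryGroup (Fin 2) ℂ,
    ∀ T, N (U * T * V) = N T)

/-!
A unitarily invariant norm is invariant under `diag(a, b) ↦ diag(a, -b)` and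
`diag(a, b) ↦ diag(b, a)`. Hence `g s = |||diag(1, s)|||` is an even convex function on `ℝ`, so it
increases on `[0, ∞)`, and `(1 + s) |||I||| = |||diag(1, s) + diag(s, 1)||| ≤ 2 g s`.

Conversely, take the supremum of all the norms `α ‖T‖ + β ‖T‖₁` (operator and trace norm,
`α, β ≥ 0`) that stay below `f` at the matrices `diag(1, s)`, `s ∈ [0, 1]`. It is a unitarily
invariant norm, definite because the weight `(1/2, 0)` is admissible. It attains `f s` at
`diag(1, s)`: for `s < 1` the supporting line of `f` at `s` has slope `β ∈ [0, 1/2]`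
(monotonicity, `f 1 = 1` and `f s ≥ (1 + s) / 2`), so it has the form `α + β (1 + s)` with
`α ≥ 0`; for `s = 1` take `(0, 1/2)`.
-/

open Matrix Set
open scoped Matrix.Norms.L2Operator NNReal

lemma Function.Even.monotoneOn_of_convexOn {g : ℝ → ℝ} (heven : g.Even) (hg : ConvexOn ℝ univ g) :
    MonotoneOn g (Ici 0) := by
  intro x hx y _ hxy
  have hseg : x ∈ segment ℝ (-y) y := by
    rw [segment_eq_Icc (by linarith [mem_Ici.mp hx])]
    exact ⟨by linarith [mem_Ici.mp hx], hxy⟩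
  simpa [heven y] using hg.le_on_segment (mem_univ _) (mem_univ _) hseg

lemma ConvexOn.add_sInf_slope_mul_le {S : Set ℝ} {f : ℝ → ℝ} (hf : ConvexOn ℝ S f) {x : ℝ}
    (hx : x ∈ S) (hne : (S ∩ Ioi x).Nonempty) (hbdd : BddBelow (slope f x '' (S ∩ Ioi x)))
    {y : ℝ} (hy : y ∈ S) : f x + sInf (slope f x '' (S ∩ Ioi x)) * (y - x) ≤ f y := by
  rcases lt_trichotomy y x with hyx | rfl | hxy
  · have h : slope f x y ≤ sInf (slope f x '' (S ∩ Ioi x)) := by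
      refine le_csInf (hne.image _) ?_
      rintro _ ⟨t, ⟨ht, hxt⟩, rfl⟩
      exact hf.slope_mono hx ⟨hy, hyx.ne⟩ ⟨ht, hxt.ne'⟩ (hyx.trans hxt).le
    rw [slope_def_field, div_le_iff_of_neg (sub_neg.mpr hyx)] at h
    linarith
  · simp
  · have h : sInf (slope f x '' (S ∩ Ioi x)) ≤ slope f x y := csInf_le hbdd ⟨y, ⟨hy, hxy⟩, rfl⟩
    rw [slope_def_field, le_div_iff₀ (sub_pos.mpr hxy)] at h
    linarith

namespace Matrix

variable {𝕜 : Type*} [RCLike 𝕜] {m n : Type*} [Fintype m] [Fintype n] [DecidableEq n]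

lemma norm_apply_le_l2_opNorm (A : Matrix m n 𝕜) (i : m) (j : n) : ‖A i j‖ ≤ ‖A‖ := by
  have h := A.l2_opNorm_mulVec (EuclideanSpace.single j 1)
  rw [PiLp.norm_single, norm_one, mul_one] at h
  refine le_trans (le_of_eq ?_) ((PiLp.norm_apply_le _ i).trans h)
  simp [EuclideanSpace.single, mulVec_single]

lemma norm_trace_le_card_mul_l2_opNorm (A : Matrix n n 𝕜) : ‖A.trace‖ ≤ Fintype.card n * ‖A‖ :=
  calc ‖A.trace‖ ≤ ∑ i, ‖A i i‖ := norm_sum_le _ _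
    _ ≤ ∑ _i : n, ‖A‖ := Finset.sum_le_sum fun i _ => A.norm_apply_le_l2_opNorm i i
    _ = Fintype.card n * ‖A‖ := by rw [Finset.sum_const, nsmul_eq_mul, Finset.card_univ]

lemma l2_opNorm_one_le : ‖(1 : Matrix n n 𝕜)‖ ≤ 1 := by
  rw [← diagonal_one, l2_opNorm_diagonal]
  exact pi_norm_le_iff_of_nonneg zero_le_one |>.mpr fun _ => norm_one.le

/-- The trace norm, as the dual of the operator norm under the pairing `(X, T) ↦ tr (X * T)`. -/
noncomputable def traceNorm : Seminorm 𝕜 (Matrix n n 𝕜) :=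
  ⨆ X : Metric.closedBall (0 : Matrix n n 𝕜) 1,
    (normSeminorm 𝕜 𝕜).comp (traceLinearMap n 𝕜 𝕜 ∘ₗ LinearMap.mulLeft 𝕜 (X : Matrix n n 𝕜))

lemma bddAbove_range_norm_trace_mul (T : Matrix n n 𝕜) :
    BddAbove (range fun X : Metric.closedBall (0 : Matrix n n 𝕜) 1 =>
      ‖((X : Matrix n n 𝕜) * T).trace‖) := by
  refine ⟨Fintype.card n * ‖T‖, ?_⟩
  rintro _ ⟨⟨X, hX⟩, rfl⟩
  rw [mem_closedBall_zero_iff] at hX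
  calc ‖(X * T).trace‖ ≤ Fintype.card n * ‖X * T‖ := norm_trace_le_card_mul_l2_opNorm _
    _ ≤ Fintype.card n * ‖T‖ := by
      gcongr
      exact (norm_mul_le X T).trans (mul_le_of_le_one_left (norm_nonneg T) hX)

lemma traceNorm_apply (T : Matrix n n 𝕜) :
    traceNorm T = ⨆ X : Metric.closedBall (0 : Matrix n n 𝕜) 1, ‖((X : Matrix n n 𝕜) * T).trace‖ :=
  Seminorm.iSup_apply (Seminorm.bddAbove_range_iff.mpr bddAbove_range_norm_trace_mul)

lemma norm_trace_mul_le_traceNorm {X : Matrix n n 𝕜} (hX : ‖X‖ ≤ 1) (T : Matrix n n 𝕜) :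
    ‖(X * T).trace‖ ≤ traceNorm T := by
  rw [traceNorm_apply]
  exact le_ciSup (bddAbove_range_norm_trace_mul T) ⟨X, mem_closedBall_zero_iff.mpr hX⟩

lemma traceNorm_le {T : Matrix n n 𝕜} {c : ℝ}
    (h : ∀ X : Matrix n n 𝕜, ‖X‖ ≤ 1 → ‖(X * T).trace‖ ≤ c) :
    traceNorm T ≤ c := by
  have : Nonempty (Metric.closedBall (0 : Matrix n n 𝕜) 1) :=
    ⟨⟨0, Metric.mem_closedBall_self zero_le_one⟩⟩
  rw [traceNorm_apply]
  exact ciSup_le fun X => h X (mem_closedBall_zero_iff.mp X.2)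

lemma traceNorm_unitary_mul_mul_le {U V : Matrix n n 𝕜} (hU : U ∈ unitaryGroup n 𝕜)
    (hV : V ∈ unitaryGroup n 𝕜) (T : Matrix n n 𝕜) : traceNorm (U * T * V) ≤ traceNorm T := by
  refine traceNorm_le fun X hX => ?_
  rw [← Matrix.mul_assoc, trace_mul_comm, ← Matrix.mul_assoc, ← Matrix.mul_assoc]
  refine norm_trace_mul_le_traceNorm ?_ T
  rwa [CStarRing.norm_mul_mem_unitary _ hU, CStarRing.norm_mem_unitary_mul _ hV]

lemma traceNorm_unitary_mul_mul {U V : Matrix n n 𝕜} (hU : U ∈ unitaryGroup n 𝕜)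
    (hV : V ∈ unitaryGroup n 𝕜) (T : Matrix n n 𝕜) : traceNorm (U * T * V) = traceNorm T := by
  refine le_antisymm (traceNorm_unitary_mul_mul_le hU hV T) ?_
  simpa [← Matrix.mul_assoc, Matrix.mul_assoc _ V, Unitary.star_mul_self_of_mem hU,
    Unitary.mul_star_self_of_mem hV] using
    traceNorm_unitary_mul_mul_le (Unitary.star_mem hU) (Unitary.star_mem hV) (U * T * V)

lemma traceNorm_diagonal_ofReal {r : n → ℝ} (hr : 0 ≤ r) :
    traceNorm (diagonal fun i => (r i : 𝕜)) = ∑ i, r i := by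
  refine le_antisymm (traceNorm_le fun X hX => ?_) ?_
  · simp only [trace, diag_apply, mul_diagonal]
    refine (norm_sum_le _ _).trans (Finset.sum_le_sum fun i _ => ?_)
    rw [norm_mul, RCLike.norm_of_nonneg (hr i)]
    exact mul_le_of_le_one_left (hr i) ((X.norm_apply_le_l2_opNorm i i).trans hX)
  · have h := norm_trace_mul_le_traceNorm l2_opNorm_one_le (diagonal fun i => (r i : 𝕜))
    rwa [Matrix.one_mul, trace_diagonal, ← RCLike.ofReal_sum,
      RCLike.norm_of_nonneg (Finset.sum_nonneg fun i _ => hr i)] at h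

lemma l2_opNorm_diagonal_one_ofReal {s : ℝ} (hs : s ∈ Icc (0 : ℝ) 1) :
    ‖diagonal ![1, (s : ℂ)]‖ = 1 := by
  rw [l2_opNorm_diagonal]
  refine le_antisymm (pi_norm_le_iff_of_nonneg zero_le_one |>.mpr fun i => ?_) ?_
  · fin_cases i <;> simp [abs_of_nonneg hs.1, hs.2]
  · simpa using norm_le_pi_norm ![1, (s : ℂ)] 0

lemma traceNorm_diagonal_one_ofReal {s : ℝ} (hs : 0 ≤ s) :
    traceNorm (diagonal ![1, (s : ℂ)]) = 1 + s := by
  have h := traceNorm_diagonal_ofReal (𝕜 := ℂ) (r := ![1, s])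
    fun i => by fin_cases i <;> simp [hs]
  have hd : (fun i => ((![1, s] i : ℝ) : ℂ)) = ![1, (s : ℂ)] := by ext i; fin_cases i <;> simp
  simpa [hd, Fin.sum_univ_two] using h

end Matrix

namespace IsUINorm

variable {N : Matrix (Fin 2) (Fin 2) ℂ → ℝ}

lemma map_add_le (hN : IsUINorm N) (S T : Matrix (Fin 2) (Fin 2) ℂ) : N (S + T) ≤ N S + N T :=
  hN.2.2.2.1 S T

lemma map_smul (hN : IsUINorm N) (c : ℂ) (T : Matrix (Fin 2) (Fin 2) ℂ) : N (c • T) = ‖c‖ * N T :=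
  hN.2.2.1 c T

lemma map_ofReal_smul (hN : IsUINorm N) {r : ℝ} (hr : 0 ≤ r) (T : Matrix (Fin 2) (Fin 2) ℂ) :
    N ((r : ℂ) • T) = r * N T := by
  rw [hN.map_smul, Complex.norm_of_nonneg hr]

lemma map_unitary_mul_mul (hN : IsUINorm N) {U V : Matrix (Fin 2) (Fin 2) ℂ}
    (hU : U ∈ unitaryGroup (Fin 2) ℂ) (hV : V ∈ unitaryGroup (Fin 2) ℂ)
    (T : Matrix (Fin 2) (Fin 2) ℂ) : N (U * T * V) = N T :=
  hN.2.2.2.2 U hU V hV T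

lemma diagonal_neg (hN : IsUINorm N) (a b : ℂ) : N (diagonal ![a, -b]) = N (diagonal ![a, b]) := by
  have hJ : diagonal ![1, -1] ∈ unitaryGroup (Fin 2) ℂ := by
    rw [mem_unitaryGroup_iff, star_eq_conjTranspose, diagonal_conjTranspose, diagonal_mul_diagonal,
      ← diagonal_one]
    congr 1
    ext i; fin_cases i <;> simp
  have h := hN.map_unitary_mul_mul (one_mem _) hJ (diagonal ![a, b])
  rwa [one_mul, diagonal_mul_diagonal, show (fun i => ![a, b] i * ![1, -1] i) = ![a, -b] by
    ext i; fin_cases i <;> simp] at h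

lemma diagonal_swap (hN : IsUINorm N) (a b : ℂ) : N (diagonal ![a, b]) = N (diagonal ![b, a]) := by
  have hW : !![0, 1; 1, 0] ∈ unitaryGroup (Fin 2) ℂ := by
    rw [mem_unitaryGroup_iff]
    ext i j
    fin_cases i <;> fin_cases j <;> simp [star_eq_conjTranspose, mul_apply, Fin.sum_univ_two]
  have h := hN.map_unitary_mul_mul hW hW (diagonal ![a, b])
  rw [show !![0, 1; 1, 0] * diagonal ![a, b] * !![0, 1; 1, 0] = diagonal ![b, a] by
    ext i j
    fin_cases i <;> fin_cases j <;> simp [mul_apply, Fin.sum_univ_two, vecMul_diagonal]] at h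
  exact h.symm

lemma convexOn_diagonal (hN : IsUINorm N) :
    ConvexOn ℝ univ fun s : ℝ => N (diagonal ![1, (s : ℂ)]) := by
  refine ⟨convex_univ, fun x _ y _ a b ha hb hab => ?_⟩
  have hsplit : diagonal ![1, ((a • x + b • y : ℝ) : ℂ)] =
      (a : ℂ) • diagonal ![1, (x : ℂ)] + (b : ℂ) • diagonal ![1, (y : ℂ)] := by
    have hab' : (a : ℂ) + b = 1 := by exact_mod_cast hab
    rw [← diagonal_smul, ← diagonal_smul, diagonal_add]
    congr 1
    ext i; fin_cases i <;> simp [hab']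
  calc N (diagonal ![1, ((a • x + b • y : ℝ) : ℂ)])
      ≤ N ((a : ℂ) • diagonal ![1, (x : ℂ)]) + N ((b : ℂ) • diagonal ![1, (y : ℂ)]) :=
        hsplit ▸ hN.map_add_le _ _
    _ = a • N (diagonal ![1, (x : ℂ)]) + b • N (diagonal ![1, (y : ℂ)]) := by
        rw [hN.map_ofReal_smul ha, hN.map_ofReal_smul hb, smul_eq_mul, smul_eq_mul]

lemma norm_one_add_mul_le (hN : IsUINorm N) (s : ℂ) : ‖1 + s‖ * N 1 ≤ 2 * N (diagonal ![1, s]) := by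
  have hsum : diagonal ![1, s] + diagonal ![s, 1] = (1 + s) • (1 : Matrix (Fin 2) (Fin 2) ℂ) := by
    rw [diagonal_add, ← diagonal_one, ← diagonal_smul]
    congr 1
    ext i; fin_cases i <;> simp [add_comm]
  calc ‖1 + s‖ * N 1 = N (diagonal ![1, s] + diagonal ![s, 1]) := by rw [hsum, hN.map_smul]
    _ ≤ N (diagonal ![1, s]) + N (diagonal ![s, 1]) := hN.map_add_le _ _
    _ = 2 * N (diagonal ![1, s]) := by rw [← hN.diagonal_swap]; ring

lemma monotoneOn_diagonal (hN : IsUINorm N) :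
    MonotoneOn (fun s : ℝ => N (diagonal ![1, (s : ℂ)])) (Ici 0) :=
  Function.Even.monotoneOn_of_convexOn
    (fun s => by simpa using hN.diagonal_neg 1 s) hN.convexOn_diagonal
end IsUINorm


lemma Seminorm.isUINorm (p : Seminorm ℂ (Matrix (Fin 2) (Fin 2) ℂ)) (hdef : ∀ T, p T = 0 → T = 0)
    (hui : ∀ U ∈ unitaryGroup (Fin 2) ℂ, ∀ V ∈ unitaryGroup (Fin 2) ℂ, ∀ T, p (U * T * V) = p T) :
    IsUINorm p :=
  ⟨apply_nonneg p, hdef, map_smul_eq_mul p, map_add_le_add p, hui⟩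

/-- `α + β (1 + s)` is the value of `α ‖·‖ + β ‖·‖₁` at `diag(1, s)`. -/
def admissibleWeights (f : ℝ → ℝ) : Set (ℝ≥0 × ℝ≥0) :=
  {w | ∀ s ∈ Icc (0 : ℝ) 1, (w.1 : ℝ) + w.2 * (1 + s) ≤ f s}

noncomputable def profileNorm (f : ℝ → ℝ) : Seminorm ℂ (Matrix (Fin 2) (Fin 2) ℂ) :=
  ⨆ w : admissibleWeights f, w.1.1 • normSeminorm ℂ _ + w.1.2 • traceNorm

section profileNorm

variable {f : ℝ → ℝ}

lemma bddAbove_range_profileNorm_weight (T : Matrix (Fin 2) (Fin 2) ℂ) :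
    BddAbove (range fun w : admissibleWeights f =>
      (w.1.1 : ℝ) * ‖T‖ + w.1.2 * traceNorm T) := by
  refine ⟨f 1 * ‖T‖ + f 1 * traceNorm T, ?_⟩
  rintro _ ⟨⟨⟨a, b⟩, hw⟩, rfl⟩
  have h1 := hw 1 ⟨zero_le_one, le_rfl⟩
  have ha : (a : ℝ) ≤ f 1 := by linarith [b.2]
  have hb : (b : ℝ) ≤ f 1 := by linarith [a.2]
  dsimp only
  gcongr

lemma profileNorm_apply (T : Matrix (Fin 2) (Fin 2) ℂ) :
    profileNorm f T = ⨆ w : admissibleWeights f,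
      (w.1.1 : ℝ) * ‖T‖ + w.1.2 * traceNorm T :=
  Seminorm.iSup_apply (Seminorm.bddAbove_range_iff.mpr bddAbove_range_profileNorm_weight)

lemma le_profileNorm {w : ℝ≥0 × ℝ≥0} (hw : w ∈ admissibleWeights f) (T : Matrix (Fin 2) (Fin 2) ℂ) :
    (w.1 : ℝ) * ‖T‖ + w.2 * traceNorm T ≤ profileNorm f T := by
  rw [profileNorm_apply]
  exact le_ciSup (bddAbove_range_profileNorm_weight T) ⟨w, hw⟩

lemma profileNorm_le [Nonempty (admissibleWeights f)] {T : Matrix (Fin 2) (Fin 2) ℂ} {c : ℝ}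
    (h : ∀ w ∈ admissibleWeights f, (w.1 : ℝ) * ‖T‖ + w.2 * traceNorm T ≤ c) :
    profileNorm f T ≤ c := by
  rw [profileNorm_apply]
  exact ciSup_le fun w => h w w.2

lemma half_zero_mem_admissibleWeights (hlow : ∀ s ∈ Icc (0 : ℝ) 1, (1 + s) / 2 ≤ f s) :
    ((1 / 2, 0) : ℝ≥0 × ℝ≥0) ∈ admissibleWeights f :=
  fun s hs => by have := hlow s hs; push_cast; linarith [hs.1]

lemma zero_half_mem_admissibleWeights (hlow : ∀ s ∈ Icc (0 : ℝ) 1, (1 + s) / 2 ≤ f s) :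
    ((0, 1 / 2) : ℝ≥0 × ℝ≥0) ∈ admissibleWeights f :=
  fun s hs => by have := hlow s hs; push_cast; linarith

lemma isUINorm_profileNorm (hlow : ∀ s ∈ Icc (0 : ℝ) 1, (1 + s) / 2 ≤ f s) :
    IsUINorm (profileNorm f) := by
  refine (profileNorm f).isUINorm (fun T hT => norm_eq_zero.mp ?_) fun U hU V hV T => ?_
  · have h := le_profileNorm (half_zero_mem_admissibleWeights hlow) T
    push_cast at h
    linarith [norm_nonneg T]
  · simp only [profileNorm_apply, CStarRing.norm_mul_mem_unitary _ hV,
      CStarRing.norm_mem_unitary_mul _ hU, traceNorm_unitary_mul_mul hU hV]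

variable (hm : MonotoneOn f (Icc 0 1)) (hc : ConvexOn ℝ (Icc 0 1) f)
  (hb : ∀ s ∈ Icc (0 : ℝ) 1, (1 + s) / 2 ≤ f s ∧ f s ≤ 1)
include hm hc hb

lemma exists_mem_admissibleWeights_eq {s₀ : ℝ} (hs₀ : s₀ ∈ Icc (0 : ℝ) 1) :
    ∃ w ∈ admissibleWeights f, (w.1 : ℝ) + w.2 * (1 + s₀) = f s₀ := by
  have hf1 : f 1 = 1 := by linarith [hb 1 ⟨zero_le_one, le_rfl⟩]
  rcases hs₀.2.eq_or_lt with rfl | hlt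
  · exact ⟨_, zero_half_mem_admissibleWeights fun s hs => (hb s hs).1, by push_cast; linarith⟩
  -- the slope of a supporting line of `f` at `s₀`
  set b := sInf (slope f s₀ '' (Icc 0 1 ∩ Ioi s₀))
  have h1 : (1 : ℝ) ∈ Icc 0 1 ∩ Ioi s₀ := ⟨⟨zero_le_one, le_rfl⟩, hlt⟩
  have hslope_nonneg : ∀ q ∈ slope f s₀ '' (Icc 0 1 ∩ Ioi s₀), 0 ≤ q := by
    rintro _ ⟨t, ⟨ht, hst⟩, rfl⟩
    rw [slope_def_field]
    exact div_nonneg (sub_nonneg.mpr (hm hs₀ ht hst.le)) (sub_nonneg.mpr hst.le)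
  have hb0 : 0 ≤ b := le_csInf ⟨_, mem_image_of_mem _ h1⟩ hslope_nonneg
  have hbhalf : b ≤ 1 / 2 := by
    refine (csInf_le ⟨0, hslope_nonneg⟩ (mem_image_of_mem _ h1)).trans ?_
    rw [slope_def_field, hf1, div_le_iff₀ (sub_pos.mpr hlt)]
    linarith [(hb s₀ hs₀).1]
  have hsupport : ∀ s ∈ Icc (0 : ℝ) 1, f s₀ + b * (s - s₀) ≤ f s :=
    fun s hs => hc.add_sInf_slope_mul_le hs₀ ⟨1, h1⟩ ⟨0, hslope_nonneg⟩ hs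
  refine ⟨(⟨f s₀ - b * (1 + s₀), ?_⟩, ⟨b, hb0⟩), fun s hs => ?_, ?_⟩
  · nlinarith [(hb s₀ hs₀).1, hs₀.1]
  · show f s₀ - b * (1 + s₀) + b * (1 + s) ≤ f s
    linarith [hsupport s hs]
  · show f s₀ - b * (1 + s₀) + b * (1 + s₀) = f s₀
    ring

lemma profileNorm_diagonal {s : ℝ} (hs : s ∈ Icc (0 : ℝ) 1) :
    profileNorm f (diagonal ![1, (s : ℂ)]) = f s := by
  have : Nonempty (admissibleWeights f) :=
    ⟨⟨_, half_zero_mem_admissibleWeights fun s hs => (hb s hs).1⟩⟩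
  have hnorms := l2_opNorm_diagonal_one_ofReal hs
  have htrace := traceNorm_diagonal_one_ofReal hs.1
  refine le_antisymm (profileNorm_le fun w hw => ?_) ?_
  · rw [hnorms, htrace, mul_one]
    exact hw s hs
  · obtain ⟨w, hw, hweq⟩ := exists_mem_admissibleWeights_eq hm hc hb hs
    simpa [hnorms, htrace, hweq] using le_profileNorm hw (diagonal ![1, (s : ℂ)])

end profileNorm

/-- A function `f : [0,1] → ℝ` arises as `f(s) = ||| diag(1, s) |||` for some normalized
unitarily invariant norm on `M₂(ℂ)` iff `f` is increasing, convex, and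
`(1+s)/2 ≤ f(s) ≤ 1` on `[0,1]`. -/
theorem stmt_17 (f : ℝ → ℝ) :
    (∃ N : Matrix (Fin 2) (Fin 2) ℂ → ℝ, IsUINorm N ∧ N 1 = 1 ∧
        ∀ s ∈ Set.Icc (0:ℝ) 1, f s = N (Matrix.diagonal ![1, (s : ℂ)])) ↔
      (MonotoneOn f (Set.Icc (0:ℝ) 1) ∧ ConvexOn ℝ (Set.Icc (0:ℝ) 1) f ∧
        ∀ s ∈ Set.Icc (0:ℝ) 1, (1 + s) / 2 ≤ f s ∧ f s ≤ 1) := by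
  have hI : diagonal ![1, ((1 : ℝ) : ℂ)] = 1 := by simp [← diagonal_one]
  constructor
  · rintro ⟨N, hN, hN1, hf⟩
    have hfN : EqOn (fun s : ℝ => N (diagonal ![1, (s : ℂ)])) f (Icc 0 1) :=
      fun s hs => (hf s hs).symm
    have hmono := (hN.monotoneOn_diagonal.mono Icc_subset_Ici_self).congr hfN
    refine ⟨hmono, (hN.convexOn_diagonal.subset (subset_univ _) (convex_Icc 0 1)).congr hfN,
      fun s hs => ⟨?_, ?_⟩⟩
    · have h := hN.norm_one_add_mul_le s
      rw [hN1, ← hf s hs, ← Complex.ofReal_one, ← Complex.ofReal_add,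
        Complex.norm_of_nonneg (by linarith [hs.1])] at h
      linarith
    · have h1 : (1 : ℝ) ∈ Icc 0 1 := ⟨zero_le_one, le_rfl⟩
      calc f s ≤ f 1 := hmono hs h1 hs.2
        _ = 1 := by rw [hf 1 h1, hI, hN1]
  · rintro ⟨hm, hc, hb⟩
    refine ⟨profileNorm f, isUINorm_profileNorm fun s hs => (hb s hs).1, ?_,
      fun s hs => (profileNorm_diagonal hm hc hb hs).symm⟩
    have h1 : (1 : ℝ) ∈ Icc 0 1 := ⟨zero_le_one, le_rfl⟩
    rw [← hI, profileNorm_diagonal hm hc hb h1]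
    linarith [hb 1 h1]
end
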